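/- arXiv:2001.08088 — 6 statements merged into one kernel-verified Lean document; each statement's English description precedes it below -/
import Mathlib

section
/- Let α : ℝ → ℝ be an extended class K function (strictly increasing with α(0) = 0). Let φ : ℝ → ℝ be differentiable on [0, ∞) with φ(0) ≥ 0 and φ'(t) ≥ -α(φ(t)) for all t ≥ 0. Then φ(t) ≥ 0 for all t ≥ 0. -/
/-- scalar barrier-function invariance lemma.
If `α` is an extended class K function (strictly increasing with `α 0 = 0`),
`φ` is differentiable on `[0, ∞)` with `φ 0 ≥ 0` and `φ' t ≥ -α (φ t)` for all `t ≥ 0`,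
then `φ t ≥ 0` for all `t ≥ 0`. -/
theorem barrier_invariance_scalar
    (α : ℝ → ℝ) (hα_mono : StrictMono α) (hα_zero : α 0 = 0)
    (φ φ' : ℝ → ℝ)
    (hφ : ∀ t ≥ (0 : ℝ), HasDerivWithinAt φ (φ' t) (Set.Ici 0) t)
    (hφ0 : φ 0 ≥ 0)
    (hineq : ∀ t ≥ (0 : ℝ), φ' t ≥ -α (φ t)) :
    ∀ t ≥ (0 : ℝ), φ t ≥ 0 := by
  intro t1 ht1
  by_contra hneg
  push_neg at hneg
  have hcont : ContinuousOn φ (Set.Ici 0) := fun x hx => (hφ x hx).continuousWithinAt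
  have ht1pos : (0 : ℝ) < t1 := by
    rcases lt_or_eq_of_le ht1 with h | h
    · exact h
    · exact absurd hφ0 (by rw [← h] at hneg; linarith)
  set S : Set ℝ := {t | t ∈ Set.Icc (0:ℝ) t1 ∧ φ t ≥ 0} with hS
  have hS0 : (0:ℝ) ∈ S := ⟨⟨le_refl _, le_of_lt ht1pos⟩, hφ0⟩
  have hSne : S.Nonempty := ⟨0, hS0⟩
  have hSbdd : BddAbove S := ⟨t1, fun x hx => hx.1.2⟩
  have hSclosed : IsClosed S := by
    have : S = Set.Icc (0:ℝ) t1 ∩ φ ⁻¹' Set.Ici 0 := by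
      ext x; simp only [hS, Set.mem_setOf_eq, Set.mem_inter_iff, Set.mem_preimage, Set.mem_Ici, ge_iff_le]
    rw [this]
    exact (hcont.mono (Set.Icc_subset_Ici_self)).preimage_isClosed_of_isClosed
      isClosed_Icc isClosed_Ici
  set s := sSup S with hs
  have hsS : s ∈ S := hSclosed.csSup_mem hSne hSbdd
  have hs0 : 0 ≤ s := hsS.1.1
  have hst1 : s ≤ t1 := hsS.1.2
  have hφs : φ s ≥ 0 := hsS.2
  have hslt : s < t1 := lt_of_le_of_ne hst1 (fun h => by rw [h] at hφs; linarith)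
  -- on (s, t1], φ < 0
  have hnegOn : ∀ x, s < x → x ≤ t1 → φ x < 0 := by
    intro x hsx hxt1
    by_contra h
    push_neg at h
    have : x ∈ S := ⟨⟨le_trans hs0 (le_of_lt hsx), hxt1⟩, h⟩
    exact absurd (le_csSup hSbdd this) (not_le.mpr hsx)
  -- φ strictly increasing on [s, t1]
  have hmono : StrictMonoOn φ (Set.Icc s t1) := by
    apply strictMonoOn_of_deriv_pos (convex_Icc s t1)
    · exact hcont.mono (fun x hx => le_trans hs0 hx.1)
    · intro x hx
      rw [interior_Icc] at hx
      have hx0 : (0:ℝ) < x := lt_of_le_of_lt hs0 hx.1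
      have hda : HasDerivAt φ (φ' x) x :=
        (hφ x (le_of_lt hx0)).hasDerivAt (Ici_mem_nhds hx0)
      rw [hda.deriv]
      have hφx : φ x < 0 := hnegOn x hx.1 (le_of_lt hx.2)
      have : α (φ x) < 0 := by
        calc α (φ x) < α 0 := hα_mono hφx
        _ = 0 := hα_zero
      linarith [hineq x (le_of_lt hx0)]
  have := hmono ⟨le_refl s, hst1⟩ ⟨le_of_lt hslt, le_refl t1⟩ hslt
  linarith
end

section
/- Consider the control system ẋ = f(x) + g(x)u(x) on ℝⁿ, where f : ℝⁿ → ℝⁿ, g : ℝⁿ → L(ℝᵐ, ℝⁿ), and u : ℝⁿ → ℝᵐ. Let h : ℝⁿ → ℝ be differentiable and let α : ℝ → ℝ be an extended class K function. Suppose that for every y ∈ ℝⁿ the control barrier function condition Dh(y)(f(y) + g(y)(u(y))) + α(h(y)) ≥ 0 holds. Then for any solution x : ℝ → ℝⁿ of the closed-loop system (i.e., x'(t) = f(x(t)) + g(x(t))(u(x(t))) for all t ≥ 0) with h(x(0)) ≥ 0, one has h(x(t)) ≥ 0 for all t ≥ 0; that is, the set C = {y : h(y) ≥ 0} is forward invariant.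 -/
/-- Control Barrier Function forward invariance for the
closed-loop system `ẋ = f(x) + g(x) u(x)`. -/
theorem cbf_forward_invariance
    (n m : ℕ)
    (f : EuclideanSpace ℝ (Fin n) → EuclideanSpace ℝ (Fin n))
    (g : EuclideanSpace ℝ (Fin n) → (EuclideanSpace ℝ (Fin m) →L[ℝ] EuclideanSpace ℝ (Fin n)))
    (u : EuclideanSpace ℝ (Fin n) → EuclideanSpace ℝ (Fin m))
    (h : EuclideanSpace ℝ (Fin n) → ℝ) (hdiff : Differentiable ℝ h)
    (α : ℝ → ℝ) (hα_mono : StrictMono α) (hα_zero : α 0 = 0)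
    (hcbf : ∀ y, fderiv ℝ h y (f y + g y (u y)) + α (h y) ≥ 0)
    (x : ℝ → EuclideanSpace ℝ (Fin n))
    (hx : ∀ t ≥ (0 : ℝ), HasDerivAt x (f (x t) + g (x t) (u (x t))) t)
    (hx0 : h (x 0) ≥ 0) :
    ∀ t ≥ (0 : ℝ), h (x t) ≥ 0 := by
  set w : ℝ → ℝ := fun t => h (x t) with hw_def
  set w' : ℝ → ℝ := fun t => fderiv ℝ h (x t) (f (x t) + g (x t) (u (x t))) with hw'_def
  have hw : ∀ t ≥ (0 : ℝ), HasDerivAt w (w' t) t := fun t ht =>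
    (hdiff (x t)).hasFDerivAt.comp_hasDerivAt t (hx t ht)
  intro t₁ ht₁
  by_contra hneg
  push_neg at hneg
  -- continuity of w on [0, t₁]
  have hcont : ContinuousOn w (Set.Icc 0 t₁) := fun t ht =>
    ((hw t ht.1).continuousAt).continuousWithinAt
  -- the set of times in [0,t₁] where w ≥ 0
  set S : Set ℝ := Set.Icc 0 t₁ ∩ w ⁻¹' Set.Ici 0 with hS_def
  have hSne : S.Nonempty := ⟨0, Set.left_mem_Icc.2 ht₁, hx0⟩
  have hScl : IsClosed S := hcont.preimage_isClosed_of_isClosed isClosed_Icc isClosed_Ici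
  have hScomp : IsCompact S :=
    isCompact_Icc.of_isClosed_subset hScl Set.inter_subset_left
  set s := sSup S with hs_def
  have hsS : s ∈ S := hScomp.sSup_mem hSne
  have hs0 : 0 ≤ s := hsS.1.1
  have hws : 0 ≤ w s := hsS.2
  have hst : s < t₁ := lt_of_le_of_ne hsS.1.2 (by
    intro hse; rw [hse] at hws; linarith)
  have hSbdd : BddAbove S := hScomp.bddAbove
  -- on (s, t₁], w < 0
  have hneg_on : ∀ t, s < t → t ≤ t₁ → w t < 0 := by
    intro t hst' htt
    by_contra hcon
    push_neg at hcon
    have : t ∈ S := ⟨⟨le_trans hs0 hst'.le, htt⟩, hcon⟩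
    exact absurd (le_csSup hSbdd this) (not_le.2 hst')
  -- MVT on [s, t₁]
  obtain ⟨c, hc, hceq⟩ := exists_hasDerivAt_eq_slope w w' hst
    (hcont.mono (Set.Icc_subset_Icc hs0 le_rfl))
    (fun t ht => hw t (le_trans hs0 ht.1.le))
  have hwc : w c < 0 := hneg_on c hc.1 hc.2.le
  have hαc : α (w c) < 0 := by
    have := hα_mono hwc
    rwa [hα_zero] at this
  have hderiv_pos : 0 < w' c := by
    have := hcbf (x c)
    simp only [hw'_def]
    linarith [hcbf (x c)]

  have : 0 < (w t₁ - w s) / (t₁ - s) := hceq ▸ hderiv_pos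
  have hpos : 0 < w t₁ - w s := by
    have h1 : 0 < t₁ - s := by linarith
    rcases div_pos_iff.mp this with ⟨h2, _⟩ | ⟨_, h3⟩ <;> linarith
  have : w t₁ ≥ 0 := by linarith
  exact absurd this (not_le.2 hneg)
end

section
/- Consider the disturbed control system ẋ = f(x) + g(x)u(x) + Mw on ℝⁿ, where f : ℝⁿ → ℝⁿ, g : ℝⁿ → L(ℝᵐ, ℝⁿ), u : ℝⁿ → ℝᵐ, M : ℝˡ → ℝⁿ is linear, and the disturbance w : ℝ → ℝˡ is a function taking values in a set W ⊆ ℝˡ. Let h : ℝⁿ → ℝ be differentiable and α : ℝ → ℝ an extended class K function. Suppose that for every y ∈ ℝⁿ and every v ∈ W, Dh(y)(f(y) + g(y)(u(y)) + Mv) + α(h(y)) ≥ 0. Then for any solution x : ℝ → ℝⁿ satisfying x'(t) = f(x(t)) + g(x(t))(u(x(t))) + M(w(t)) with w(t) ∈ W for all t ≥ 0 and h(x(0)) ≥ 0, one has h(x(t)) ≥ 0 for all t ≥ 0; i.e., the set C = {y : h(y) ≥ 0} is forward invariant (Theorem 1: a CBF in presence of disturbance renders C forward invariant). -/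
/-- Theorem 1: a CBF in presence of disturbance renders
`C = {y | h y ≥ 0}` forward invariant for `ẋ = f(x) + g(x) u(x) + M w`. -/
theorem cbfd_forward_invariance
    (n m l : ℕ)
    (f : EuclideanSpace ℝ (Fin n) → EuclideanSpace ℝ (Fin n))
    (g : EuclideanSpace ℝ (Fin n) → (EuclideanSpace ℝ (Fin m) →L[ℝ] EuclideanSpace ℝ (Fin n)))
    (u : EuclideanSpace ℝ (Fin n) → EuclideanSpace ℝ (Fin m))
    (M : EuclideanSpace ℝ (Fin l) →L[ℝ] EuclideanSpace ℝ (Fin n))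
    (W : Set (EuclideanSpace ℝ (Fin l)))
    (h : EuclideanSpace ℝ (Fin n) → ℝ) (hdiff : Differentiable ℝ h)
    (α : ℝ → ℝ) (hα_mono : StrictMono α) (hα_zero : α 0 = 0)
    (hcbfd : ∀ y, ∀ v ∈ W, fderiv ℝ h y (f y + g y (u y) + M v) + α (h y) ≥ 0)
    (w : ℝ → EuclideanSpace ℝ (Fin l)) (hw : ∀ t ≥ (0 : ℝ), w t ∈ W)
    (x : ℝ → EuclideanSpace ℝ (Fin n))
    (hx : ∀ t ≥ (0 : ℝ), HasDerivAt x (f (x t) + g (x t) (u (x t)) + M (w t)) t)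
    (hx0 : h (x 0) ≥ 0) :
    ∀ t ≥ (0 : ℝ), h (x t) ≥ 0 := by
  set φ : ℝ → ℝ := fun t => h (x t) with hφ
  -- derivative of φ at nonneg times
  have hφ' : ∀ t ≥ (0:ℝ), HasDerivAt φ
      (fderiv ℝ h (x t) (f (x t) + g (x t) (u (x t)) + M (w t))) t := by
    intro t ht
    exact (hdiff (x t)).hasFDerivAt.comp_hasDerivAt t (hx t ht)
  by_contra hcon
  push_neg at hcon
  obtain ⟨t1, ht1, hφt1⟩ := hcon
  have ht1pos : 0 < t1 := by
    rcases lt_or_eq_of_le ht1 with h' | h'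
    · exact h'
    · exfalso; rw [← h'] at hφt1; exact absurd hx0 (not_le.mpr hφt1)
  -- the set of good times up to t1
  set S : Set ℝ := Set.Icc 0 t1 ∩ φ ⁻¹' Set.Ici 0 with hS
  have hScont : ContinuousOn φ (Set.Icc 0 t1) := fun t ht =>
    ((hφ' t ht.1).continuousAt).continuousWithinAt
  have hSclosed : IsClosed S :=
    hScont.preimage_isClosed_of_isClosed isClosed_Icc isClosed_Ici
  have hSne : S.Nonempty := ⟨0, ⟨le_refl 0, le_of_lt ht1pos⟩, hx0⟩
  have hSbdd : BddAbove S := ⟨t1, fun t ht => ht.1.2⟩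
  set t0 := sSup S with ht0
  have ht0S : t0 ∈ S := hSclosed.csSup_mem hSne hSbdd
  have ht0nonneg : (0:ℝ) ≤ t0 := ht0S.1.1
  have ht0le : t0 ≤ t1 := ht0S.1.2
  have hφt0 : 0 ≤ φ t0 := ht0S.2
  have ht0lt : t0 < t1 := lt_of_le_of_ne ht0le (by
    intro hEq; rw [hEq] at hφt0; exact absurd hφt0 (not_le.mpr hφt1))
  -- φ < 0 on (t0, t1]
  have hneg : ∀ t, t0 < t → t ≤ t1 → φ t < 0 := by
    intro t htl htu
    by_contra hge
    push_neg at hge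
    have : t ∈ S := ⟨⟨le_trans ht0nonneg (le_of_lt htl), htu⟩, hge⟩
    exact absurd (le_csSup hSbdd this) (not_le.mpr htl)
  -- φ strictly increasing on [t0, t1]
  have hmono : StrictMonoOn φ (Set.Icc t0 t1) := by
    apply strictMonoOn_of_deriv_pos (convex_Icc t0 t1)
    · exact hScont.mono (Set.Icc_subset_Icc ht0nonneg le_rfl)
    · intro t ht
      rw [interior_Icc] at ht
      have htnn : (0:ℝ) ≤ t := le_trans ht0nonneg (le_of_lt ht.1)
      have hd := hφ' t htnn
      rw [hd.deriv]
      have h1 := hcbfd (x t) (w t) (hw t htnn)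
      have h2 : α (φ t) < 0 := by
        rw [← hα_zero]
        exact hα_mono (hneg t ht.1 (le_of_lt ht.2))
      linarith
  have := hmono (Set.left_mem_Icc.mpr ht0le) (Set.right_mem_Icc.mpr ht0le) ht0lt
  linarith
end

section
/- Let m ≥ 1, let α₁, …, α_m : ℝ → ℝ be extended class K functions, and let φ₀, φ₁, …, φ_m : ℝ → ℝ be functions such that for each i = 0, …, m-1, φᵢ is differentiable on [0, ∞) and φᵢ₊₁(t) = φᵢ'(t) + αᵢ₊₁(φᵢ(t)) for all t ≥ 0. Suppose φ_m(t) ≥ 0 for all t ≥ 0 and φᵢ(0) ≥ 0 for all i = 0, …, m-1. Then φᵢ(t) ≥ 0 for all t ≥ 0 and all i = 0, …, m-1; in particular φ₀(t) ≥ 0 for all t ≥ 0. -/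
open Set

/-- Comparison lemma: if `f 0 ≥ 0`, `f` is differentiable on `[0,∞)` with derivative `f'`,
`α` is strictly monotone with `α 0 = 0`, and `f' t + α (f t) ≥ 0` on `[0,∞)`,
then `f ≥ 0` on `[0,∞)`. -/
lemma key_comparison (a : ℝ → ℝ) (hmono : StrictMono a) (ha0 : a 0 = 0)
    (f f' : ℝ → ℝ)
    (hd : ∀ t ≥ (0 : ℝ), HasDerivWithinAt f (f' t) (Set.Ici 0) t)
    (hge : ∀ t ≥ (0 : ℝ), f' t + a (f t) ≥ 0)
    (hf0 : f 0 ≥ 0) : ∀ t ≥ (0 : ℝ), f t ≥ 0 := by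
  intro t₁ ht₁
  by_contra hneg
  push_neg at hneg
  have hcont : ContinuousOn f (Ici 0) := fun x hx => (hd x hx).continuousWithinAt
  set S : Set ℝ := Icc 0 t₁ ∩ f ⁻¹' (Ici 0) with hS
  have h0S : (0 : ℝ) ∈ S := ⟨⟨le_refl 0, ht₁⟩, hf0⟩
  have hne : S.Nonempty := ⟨0, h0S⟩
  have hbdd : BddAbove S := ⟨t₁, fun x hx => hx.1.2⟩
  have hclosed : IsClosed S :=
    (hcont.mono (Icc_subset_Ici_self)).preimage_isClosed_of_isClosed isClosed_Icc isClosed_Ici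
  set s := sSup S with hs
  have hsS : s ∈ S := hclosed.csSup_mem hne hbdd
  have hs0 : 0 ≤ s := hsS.1.1
  have hst₁ : s ≤ t₁ := hsS.1.2
  have hfs : 0 ≤ f s := hsS.2
  have hslt : s < t₁ := lt_of_le_of_ne hst₁ (by intro h; rw [h] at hfs; exact absurd hfs (not_le.2 hneg))
  -- On (s, t₁), f < 0, hence f' > 0, so f is strictly monotone on [s, t₁].
  have hmonoI : StrictMonoOn f (Icc s t₁) := by
    apply strictMonoOn_of_deriv_pos (convex_Icc s t₁)
    · exact hcont.mono (fun x hx => le_trans hs0 hx.1)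
    · intro x hx
      rw [interior_Icc] at hx
      have hx0 : 0 < x := lt_of_le_of_lt hs0 hx.1
      have hfx : f x < 0 := by
        by_contra hge'
        push_neg at hge'
        exact absurd (le_csSup hbdd ⟨⟨le_of_lt hx0, le_of_lt hx.2⟩, hge'⟩) (not_le.2 hx.1)
      have hda : HasDerivAt f (f' x) x :=
        (hd x hx0.le).hasDerivAt (Ici_mem_nhds hx0)
      rw [hda.deriv]
      have : a (f x) < 0 := by
        have := hmono hfx
        rwa [ha0] at this
      linarith [hge x hx0.le]
  have : f s < f t₁ := hmonoI ⟨le_refl s, hst₁⟩ ⟨hst₁, le_refl t₁⟩ hslt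
  linarith

/-- trajectory form of Theorem 2, HOCBFD invariance.
Given extended class K functions `α 1, …, α m` and functions `φ 0, …, φ m` with
`φ (i+1) = (φ i)' + α (i+1) ∘ (φ i)` on `[0, ∞)` for `i < m`, if `φ m ≥ 0` on `[0, ∞)`
and `φ i 0 ≥ 0` for all `i < m`, then `φ i t ≥ 0` for all `t ≥ 0` and `i < m`. -/
theorem hobf_chain_invariance
    (m : ℕ) (hm : 1 ≤ m)
    (α : ℕ → ℝ → ℝ)
    (hα : ∀ i, 1 ≤ i → i ≤ m → StrictMono (α i) ∧ α i 0 = 0)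
    (φ φ' : ℕ → ℝ → ℝ)
    (hdiff : ∀ i < m, ∀ t ≥ (0 : ℝ), HasDerivWithinAt (φ i) (φ' i t) (Set.Ici 0) t)
    (hrec : ∀ i < m, ∀ t ≥ (0 : ℝ), φ (i + 1) t = φ' i t + α (i + 1) (φ i t))
    (hψm : ∀ t ≥ (0 : ℝ), φ m t ≥ 0)
    (h0 : ∀ i < m, φ i 0 ≥ 0) :
    ∀ i < m, ∀ t ≥ (0 : ℝ), φ i t ≥ 0 := by
  -- downward induction: for all j ≤ m, φ (m - j) ≥ 0 on [0, ∞)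
  have main : ∀ j ≤ m, ∀ t ≥ (0 : ℝ), φ (m - j) t ≥ 0 := by
    intro j
    induction j with
    | zero => simpa using hψm
    | succ k ih =>
      intro hk t ht
      have hkm : k ≤ m := le_of_lt (Nat.lt_of_lt_of_le (Nat.lt_succ_self k) hk)
      set i := m - (k + 1) with hi
      have him : i < m := Nat.sub_lt (lt_of_lt_of_le Nat.one_pos hm) (Nat.succ_pos k)
      have hsucc : i + 1 = m - k := by omega
      have h1 : 1 ≤ i + 1 := Nat.succ_le_succ (Nat.zero_le i)
      have h2 : i + 1 ≤ m := by omega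
      obtain ⟨hmono, ha0⟩ := hα (i + 1) h1 h2
      refine key_comparison (α (i + 1)) hmono ha0 (φ i) (φ' i)
        (hdiff i him) ?_ (h0 i him) t ht
      intro u hu
      have := ih hkm u hu
      rw [← hsucc] at this
      rw [hrec i him u hu] at this
      linarith
  intro i him t ht
  have : i = m - (m - i) := by omega
  rw [this]
  exact main (m - i) (Nat.sub_le m i) t ht
end

section
/- Let α₁ : ℝ → ℝ be a differentiable extended class K function and α₂ : ℝ → ℝ an extended class K function. Let φ : ℝ → ℝ be twice differentiable on [0, ∞) and suppose that for all t ≥ 0, φ''(t) + α₁'(φ(t))·φ'(t) + α₂(φ'(t) + α₁(φ(t))) ≥ 0. If φ(0) ≥ 0 and φ'(0) + α₁(φ(0)) ≥ 0, then φ(t) ≥ 0 for all t ≥ 0. -/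
/-- First-order barrier lemma: if `f' t + α (f t) ≥ 0` on `[0,∞)` with `α`
strictly monotone vanishing at `0`, and `f 0 ≥ 0`, then `f ≥ 0` on `[0,∞)`. -/
lemma barrier_first_order
    (α : ℝ → ℝ) (hmono : StrictMono α) (hzero : α 0 = 0)
    (f f' : ℝ → ℝ)
    (hd : ∀ t ≥ (0 : ℝ), HasDerivWithinAt f (f' t) (Set.Ici 0) t)
    (hineq : ∀ t ≥ (0 : ℝ), f' t + α (f t) ≥ 0)
    (h0 : f 0 ≥ 0) : ∀ t ≥ (0 : ℝ), f t ≥ 0 := by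
  by_contra h
  push_neg at h
  obtain ⟨b, hb0, hfb⟩ := h
  have hcont : ContinuousOn f (Set.Ici 0) := fun t ht =>
    (hd t ht).continuousWithinAt
  set S : Set ℝ := {t | t ∈ Set.Icc (0:ℝ) b ∧ 0 ≤ f t} with hS
  have hSne : S.Nonempty := ⟨0, ⟨le_refl 0, hb0⟩, h0⟩
  have hSbdd : BddAbove S := ⟨b, fun t ht => ht.1.2⟩
  have hSclosed : IsClosed S := by
    have h1 : ContinuousOn f (Set.Icc (0:ℝ) b) :=
      hcont.mono (Set.Icc_subset_Ici_self)
    have := h1.preimage_isClosed_of_isClosed isClosed_Icc (isClosed_Ici (a := (0:ℝ)))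
    simpa [hS, Set.preimage, Set.mem_Ici, Set.inter_def] using this
  set c := sSup S with hc
  have hcS : c ∈ S := hSclosed.csSup_mem hSne hSbdd
  have hc0 : 0 ≤ c := hcS.1.1
  have hcb : c ≤ b := hcS.1.2
  have hfc : 0 ≤ f c := hcS.2
  have hcltb : c < b := lt_of_le_of_ne hcb (fun h => (not_le.2 hfb) (h ▸ hfc))
  have hneg : ∀ t ∈ Set.Ioc c b, f t < 0 := by
    intro t ht
    by_contra hge
    push_neg at hge
    have : t ∈ S := ⟨⟨hc0.trans ht.1.le, ht.2⟩, hge⟩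
    exact absurd (le_csSup hSbdd this) (not_le.2 ht.1)
  have hmonoF : StrictMonoOn f (Set.Icc c b) := by
    apply strictMonoOn_of_deriv_pos (convex_Icc c b)
    · exact hcont.mono (fun x hx => hc0.trans hx.1)
    · intro t ht
      rw [interior_Icc] at ht
      have ht0 : 0 < t := lt_of_le_of_lt hc0 ht.1
      have hda : HasDerivAt f (f' t) t :=
        (hd t ht0.le).hasDerivAt (Ici_mem_nhds ht0)
      rw [hda.deriv]
      have hft : f t < 0 := hneg t ⟨ht.1, ht.2.le⟩
      have : α (f t) < 0 := hzero ▸ hmono hft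
      linarith [hineq t ht0.le]
  have := hmonoF (Set.left_mem_Icc.2 hcltb.le) (Set.right_mem_Icc.2 hcltb.le) hcltb
  linarith

/-- relative-degree-two high order barrier invariance.
If `φ'' + α₁'(φ)·φ' + α₂(φ' + α₁(φ)) ≥ 0` on `[0, ∞)`, `φ 0 ≥ 0` and
`φ' 0 + α₁ (φ 0) ≥ 0`, then `φ t ≥ 0` for all `t ≥ 0`. -/
theorem hobf_order_two_invariance
    (α₁ : ℝ → ℝ) (hα₁_mono : StrictMono α₁) (hα₁_zero : α₁ 0 = 0)
    (α₁' : ℝ → ℝ) (hα₁_diff : ∀ y, HasDerivAt α₁ (α₁' y) y)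
    (α₂ : ℝ → ℝ) (hα₂_mono : StrictMono α₂) (hα₂_zero : α₂ 0 = 0)
    (φ φ' φ'' : ℝ → ℝ)
    (hd1 : ∀ t ≥ (0 : ℝ), HasDerivWithinAt φ (φ' t) (Set.Ici 0) t)
    (hd2 : ∀ t ≥ (0 : ℝ), HasDerivWithinAt φ' (φ'' t) (Set.Ici 0) t)
    (hineq : ∀ t ≥ (0 : ℝ), φ'' t + α₁' (φ t) * φ' t + α₂ (φ' t + α₁ (φ t)) ≥ 0)
    (h0 : φ 0 ≥ 0) (h1 : φ' 0 + α₁ (φ 0) ≥ 0) :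
    ∀ t ≥ (0 : ℝ), φ t ≥ 0 := by
  have hψ : ∀ t ≥ (0:ℝ), φ' t + α₁ (φ t) ≥ 0 := by
    apply barrier_first_order α₂ hα₂_mono hα₂_zero
      (fun t => φ' t + α₁ (φ t)) (fun t => φ'' t + α₁' (φ t) * φ' t)
    · intro t ht
      exact (hd2 t ht).add (((hα₁_diff (φ t)).comp_hasDerivWithinAt t (hd1 t ht)))
    · intro t ht
      have := hineq t ht
      linarith
    · exact h1
  apply barrier_first_order α₁ hα₁_mono hα₁_zero φ φ' hd1 hψ h0
end

section
/- Let α₁, α₂ : ℝ → ℝ be extended class K functions and let φ : ℝ → ℝ be differentiable on [0, ∞) with differentiable derivative φ'. Define ψ₁(t) = φ'(t) + α₁(φ(t)) and suppose ψ₁ is differentiable with ψ₁'(t) + α₂(ψ₁(t)) ≥ 0 for all t ≥ 0. If φ(0) ≥ 0 and ψ₁(0) ≥ 0, then ψ₁(t) ≥ 0 for all t ≥ 0 and φ(t) ≥ 0 for all t ≥ 0. -/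
lemma hobf_aux (f f' : ℝ → ℝ)
    (hf : ∀ t ≥ (0 : ℝ), HasDerivWithinAt f (f' t) (Set.Ici 0) t)
    (hpos : ∀ t ≥ (0 : ℝ), f t ≤ 0 → 0 ≤ f' t)
    (h0 : 0 ≤ f 0) : ∀ t ≥ (0 : ℝ), 0 ≤ f t := by
  intro s hs
  by_contra hneg
  push_neg at hneg
  have hcont : ContinuousOn f (Set.Icc 0 s) := fun t ht =>
    ((hf t ht.1).continuousWithinAt).mono (fun x hx => hx.1)
  set S : Set ℝ := Set.Icc 0 s ∩ f ⁻¹' Set.Ici 0 with hS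
  have hSne : S.Nonempty := ⟨0, ⟨le_refl 0, hs⟩, h0⟩
  have hSbdd : BddAbove S := ⟨s, fun x hx => hx.1.2⟩
  have hSclosed : IsClosed S :=
    hcont.preimage_isClosed_of_isClosed isClosed_Icc isClosed_Ici
  have ht₀S : sSup S ∈ S := hSclosed.csSup_mem hSne hSbdd
  set t₀ := sSup S with ht₀
  have ht₀0 : (0 : ℝ) ≤ t₀ := ht₀S.1.1
  have ht₀s : t₀ ≤ s := ht₀S.1.2
  have hft₀ : 0 ≤ f t₀ := ht₀S.2
  have ht₀lt : t₀ < s := ht₀s.lt_of_ne (fun h => (not_le.mpr hneg) (h ▸ hft₀))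
  -- on (t₀, s], f < 0
  have hflt : ∀ t, t₀ < t → t ≤ s → f t < 0 := by
    intro t ht hts
    by_contra h
    push_neg at h
    exact absurd (le_csSup hSbdd ⟨⟨ht₀0.trans ht.le, hts⟩, h⟩) (not_le.mpr ht)
  -- f is monotone on [t₀, s]
  have hmono : MonotoneOn f (Set.Icc t₀ s) := by
    apply monotoneOn_of_deriv_nonneg (convex_Icc _ _) (hcont.mono ?_)
    · intro t ht
      rw [interior_Icc] at ht
      have ht0 : (0 : ℝ) < t := lt_of_le_of_lt ht₀0 ht.1
      exact ((hf t ht0.le).hasDerivAt (Ici_mem_nhds ht0)).differentiableAt.differentiableWithinAt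
    · intro t ht
      rw [interior_Icc] at ht
      have ht0 : (0 : ℝ) < t := lt_of_le_of_lt ht₀0 ht.1
      rw [((hf t ht0.le).hasDerivAt (Ici_mem_nhds ht0)).deriv]
      exact hpos t ht0.le (hflt t ht.1 ht.2.le).le
    · intro x hx
      exact ⟨ht₀0.trans hx.1, hx.2⟩
  have := hmono ⟨le_refl t₀, ht₀s⟩ ⟨ht₀s, le_refl s⟩ ht₀s
  linarith


/-- two-step chaining argument in the proof of Theorem 2.
With `ψ₁ = φ' + α₁ ∘ φ`, the condition `ψ₁' + α₂(ψ₁) ≥ 0` together with `ψ₁ 0 ≥ 0`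
forces `ψ₁ t ≥ 0`, which together with `φ 0 ≥ 0` forces `φ t ≥ 0`, for all `t ≥ 0`. -/
theorem hobf_two_step_chaining
    (α₁ : ℝ → ℝ) (hα₁_mono : StrictMono α₁) (hα₁_zero : α₁ 0 = 0)
    (α₂ : ℝ → ℝ) (hα₂_mono : StrictMono α₂) (hα₂_zero : α₂ 0 = 0)
    (φ φ' φ'' : ℝ → ℝ)
    (hφ : ∀ t ≥ (0 : ℝ), HasDerivWithinAt φ (φ' t) (Set.Ici 0) t)
    (hφ' : ∀ t ≥ (0 : ℝ), HasDerivWithinAt φ' (φ'' t) (Set.Ici 0) t)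
    (ψ₁' : ℝ → ℝ)
    (hψ : ∀ t ≥ (0 : ℝ),
      HasDerivWithinAt (fun s => φ' s + α₁ (φ s)) (ψ₁' t) (Set.Ici 0) t)
    (hineq : ∀ t ≥ (0 : ℝ), ψ₁' t + α₂ (φ' t + α₁ (φ t)) ≥ 0)
    (h0 : φ 0 ≥ 0) (hψ0 : φ' 0 + α₁ (φ 0) ≥ 0) :
    (∀ t ≥ (0 : ℝ), φ' t + α₁ (φ t) ≥ 0) ∧ (∀ t ≥ (0 : ℝ), φ t ≥ 0) := by
  have hψpos : ∀ t ≥ (0 : ℝ), 0 ≤ φ' t + α₁ (φ t) := by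
    apply hobf_aux _ ψ₁' hψ _ hψ0
    intro t ht hle
    have : α₂ (φ' t + α₁ (φ t)) ≤ α₂ 0 := by
      rcases eq_or_lt_of_le hle with h | h
      · rw [h]
      · exact (hα₂_mono h).le
    rw [hα₂_zero] at this
    have := hineq t ht
    linarith
  refine ⟨fun t ht => hψpos t ht, ?_⟩
  apply hobf_aux φ φ' hφ _ h0
  intro t ht hle
  have hA : α₁ (φ t) ≤ α₁ 0 := by
    rcases eq_or_lt_of_le hle with h | h
    · rw [h]
    · exact (hα₁_mono h).le
  rw [hα₁_zero] at hA
  have := hψpos t ht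
  linarith
end
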